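/- arXiv:1702.05345 — 5 statements merged into one kernel-verified Lean document; each statement's English description precedes it below -/
import Mathlib

section
/- Let A = F_d* diag(â) F_d be a circular convolution operator on ℓ²(ℤ_d) with kernel a, let λ_1,…,λ_N be the distinct eigenvalues of A, and let P_k be the orthogonal projection onto the eigenspace E_k of diag(â) for λ_k (the span of {e_l : â(l) = λ_k}). Let Ω ⊂ ℤ_d, set f_i = F_d e_i, assign to each i ∈ Ω a nonnegative integer l_i, and let Y = {e_i, A e_i, …, A^{l_i} e_i : i ∈ Ω}. If Y is a frame for ℓ²(ℤ_d), then for each k the family {P_k f_i : i ∈ Ω} is a frame for E_k; consequently |Ω| ≥ max_k dim E_k. -/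
open Matrix

/-- Unnormalized discrete Fourier transform of `a : ZMod d → ℂ`. -/
noncomputable def hatKer (d : ℕ) [NeZero d] (a : ZMod d → ℂ) : ZMod d → ℂ :=
  fun j => ∑ k : ZMod d,
    a k * Complex.exp (-(2 * (Real.pi : ℂ) * Complex.I) * ((j.val : ℂ) * (k.val : ℂ)) / (d : ℂ))

/-- The circular convolution operator with kernel `a`, as a matrix. -/
def convMat (d : ℕ) (a : ZMod d → ℂ) : Matrix (ZMod d) (ZMod d) ℂ :=
  Matrix.of fun k i => a (k - i)

/-- The normalized discrete Fourier matrix `F_d`. -/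
noncomputable def FdMat (d : ℕ) : Matrix (ZMod d) (ZMod d) ℂ :=
  Matrix.of fun j k =>
    ((Real.sqrt d : ℝ) : ℂ)⁻¹ *
      Complex.exp (-(2 * (Real.pi : ℂ) * Complex.I) * ((j.val : ℂ) * (k.val : ℂ)) / (d : ℂ))


open Matrix ZMod

variable {d : ℕ} [NeZero d]

lemma chi_eq (j k : ZMod d) :
    Complex.exp (-(2 * (Real.pi : ℂ) * Complex.I) * ((j.val : ℂ) * (k.val : ℂ)) / (d : ℂ))
      = stdAddChar (-(j * k)) := by
  have h : -(j * k) = ((-(j.val * k.val : ℕ) : ℤ) : ZMod d) := by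
    push_cast
    rw [ZMod.natCast_val, ZMod.natCast_val, ZMod.cast_id, ZMod.cast_id]
  rw [h, ZMod.stdAddChar_coe]
  congr 1
  push_cast
  ring

lemma hatKer_eq' (a : ZMod d → ℂ) : hatKer d a = ⇑(ZMod.dft) a := by
  ext j
  simp only [hatKer, ZMod.dft_apply, smul_eq_mul, chi_eq]
  exact Finset.sum_congr rfl fun k _ => by rw [mul_comm, mul_comm j k]

lemma FdMat_mulVec (v : ZMod d → ℂ) :
    FdMat d *ᵥ v = ((Real.sqrt d : ℝ) : ℂ)⁻¹ • (ZMod.dft v) := by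
  ext j
  simp only [FdMat, mulVec, dotProduct, of_apply, Pi.smul_apply, smul_eq_mul, ZMod.dft_apply,
    chi_eq, Finset.mul_sum]
  exact Finset.sum_congr rfl fun k _ => by rw [mul_comm j k]; ring

lemma conv_dft (a v : ZMod d → ℂ) :
    ZMod.dft (convMat d a *ᵥ v) = fun j => (ZMod.dft a j) * (ZMod.dft v j) := by
  ext j
  simp only [ZMod.dft_apply, convMat, mulVec, dotProduct, of_apply, smul_eq_mul, Finset.mul_sum]
  rw [Finset.sum_comm]
  refine Finset.sum_congr rfl fun i _ => ?_
  rw [Finset.sum_mul]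
  refine Fintype.sum_equiv (Equiv.subRight i) _ _ fun k => ?_
  simp only [Equiv.subRight_apply]
  have h1 : stdAddChar (-(k * j)) = stdAddChar (-((k - i) * j)) * stdAddChar (-(i * j)) := by
    rw [← AddChar.map_add_eq_mul]; congr 1; ring
  rw [h1]; ring

lemma conv_pow_dft (a v : ZMod d → ℂ) (n : ℕ) :
    ZMod.dft ((convMat d a) ^ n *ᵥ v) = fun j => (ZMod.dft a j) ^ n * (ZMod.dft v j) := by
  induction n with
  | zero => simp [Matrix.one_mulVec]
  | succ n ih =>
    rw [pow_succ', ← Matrix.mulVec_mulVec, conv_dft, ih]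
    ext j
    ring

/-- if `Y = {A^n e_i : i ∈ Ω, n ≤ l i}` is a frame (its span is everything),
then for each eigenvalue `λ` of `diag(â)` the projections of the Fourier vectors
`f_i = F_d e_i` onto the eigenspace `E_λ = span{e_t : â t = λ}` span that eigenspace
(the orthogonal projection being coordinatewise restriction, i.e. the `Set.indicator`),
and consequently `|Ω| ≥ dim E_λ = #{t : â t = λ}` for each eigenvalue `λ`. -/
theorem stmt0 (d : ℕ) [NeZero d] (a : ZMod d → ℂ) (Ω : Finset (ZMod d)) (l : ZMod d → ℕ)
    (hY : Submodule.span ℂ {v : ZMod d → ℂ | ∃ i ∈ Ω, ∃ n ≤ l i,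
        v = (convMat d a) ^ n *ᵥ (Pi.single i 1 : ZMod d → ℂ)} = ⊤) :
    ∀ lam ∈ Set.range (hatKer d a),
      (Submodule.span ℂ {v : ZMod d → ℂ | ∃ i ∈ Ω,
          v = Set.indicator {t : ZMod d | hatKer d a t = lam}
                (FdMat d *ᵥ (Pi.single i 1 : ZMod d → ℂ))}
        = Submodule.span ℂ {v : ZMod d → ℂ | ∃ t : ZMod d,
            hatKer d a t = lam ∧ v = (Pi.single t 1 : ZMod d → ℂ)}) ∧
      Nat.card {t : ZMod d | hatKer d a t = lam} ≤ Ω.card := by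
  classical
  intro lam _hlam
  set S : Set (ZMod d) := {t : ZMod d | hatKer d a t = lam} with hS
  set G1 : Set (ZMod d → ℂ) := {v : ZMod d → ℂ | ∃ i ∈ Ω,
      v = Set.indicator S (FdMat d *ᵥ (Pi.single i 1 : ZMod d → ℂ))} with hG1
  set G2 : Set (ZMod d → ℂ) := {v : ZMod d → ℂ | ∃ t : ZMod d,
      hatKer d a t = lam ∧ v = (Pi.single t 1 : ZMod d → ℂ)} with hG2
  -- the indicator as a linear map
  set P : (ZMod d → ℂ) →ₗ[ℂ] (ZMod d → ℂ) :=
    { toFun := fun v => S.indicator v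
      map_add' := fun f g => by
        ext s; by_cases hs : s ∈ S <;> simp [Set.indicator, hs]
      map_smul' := fun c f => by
        ext s; by_cases hs : s ∈ S <;> simp [Set.indicator, hs] } with hP
  have hPapp : ∀ v : ZMod d → ℂ, P v = S.indicator v := fun v => rfl
  -- representation of any function as a sum of singles
  have hrepr : ∀ w : ZMod d → ℂ, w = ∑ t : ZMod d, w t • (Pi.single t 1 : ZMod d → ℂ) := by
    intro w
    conv_lhs => rw [← Finset.univ_sum_single w]
    refine Finset.sum_congr rfl fun t _ => ?_
    rw [← Pi.single_smul, smul_eq_mul, mul_one]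
  -- any indicator lies in span G2
  have hind : ∀ u : ZMod d → ℂ, S.indicator u ∈ Submodule.span ℂ G2 := by
    intro u
    rw [hrepr (S.indicator u)]
    refine Submodule.sum_mem _ fun t _ => ?_
    by_cases ht : t ∈ S
    · exact Submodule.smul_mem _ _ (Submodule.subset_span ⟨t, ht, rfl⟩)
    · rw [Set.indicator_of_notMem ht]
      simp
  -- span of dft image of the frame is everything
  have hFtop : Submodule.span ℂ
      ((⇑(ZMod.dft (N := d) (E := ℂ)).toLinearMap) '' {v : ZMod d → ℂ | ∃ i ∈ Ω, ∃ n ≤ l i,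
        v = (convMat d a) ^ n *ᵥ (Pi.single i 1 : ZMod d → ℂ)}) = ⊤ := by
    rw [Submodule.span_image, hY, Submodule.map_top, LinearEquiv.range]
  have hsqrt : ((Real.sqrt d : ℝ) : ℂ) ≠ 0 := by
    have : (0 : ℝ) < Real.sqrt d := Real.sqrt_pos.mpr (by
      exact_mod_cast Nat.pos_of_ne_zero (NeZero.ne d))
    exact_mod_cast this.ne'
  -- main span equality
  have hspan : Submodule.span ℂ G1 = Submodule.span ℂ G2 := by
    apply le_antisymm
    · refine Submodule.span_le.mpr ?_
      rintro v ⟨i, _hi, rfl⟩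
      exact hind _
    · refine Submodule.span_le.mpr ?_
      rintro v ⟨t, ht, rfl⟩
      have htS : t ∈ S := ht
      -- Pi.single t 1 is fixed by P
      have hPt : S.indicator (Pi.single t 1 : ZMod d → ℂ) = Pi.single t 1 := by
        ext s
        by_cases hs : s ∈ S
        · simp [Set.indicator_of_mem hs]
        · have hst : s ≠ t := fun h => hs (h ▸ htS)
          simp [Set.indicator_of_notMem hs, Pi.single_eq_of_ne hst]
      have h1 : (Pi.single t 1 : ZMod d → ℂ) ∈
          Submodule.map P (Submodule.span ℂ
            ((⇑(ZMod.dft (N := d) (E := ℂ)).toLinearMap) '' {v : ZMod d → ℂ | ∃ i ∈ Ω, ∃ n ≤ l i,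
              v = (convMat d a) ^ n *ᵥ (Pi.single i 1 : ZMod d → ℂ)})) := by
        rw [hFtop, Submodule.map_top]
        exact ⟨Pi.single t 1, by rw [hPapp, hPt]⟩
      rw [Submodule.map_span, ← Set.image_comp] at h1
      refine Submodule.span_le.mpr ?_ h1
      rintro w ⟨y, ⟨i, hi, n, _hn, rfl⟩, rfl⟩
      -- compute P (dft (A^n e_i))
      have hcomp : (P ∘ ⇑(ZMod.dft (N := d) (E := ℂ)).toLinearMap)
            ((convMat d a) ^ n *ᵥ (Pi.single i 1 : ZMod d → ℂ))
          = (lam ^ n * ((Real.sqrt d : ℝ) : ℂ)) •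
              S.indicator (FdMat d *ᵥ (Pi.single i 1 : ZMod d → ℂ)) := by
        rw [Function.comp_apply, LinearEquiv.coe_coe, hPapp, conv_pow_dft]
        rw [FdMat_mulVec]
        ext s
        by_cases hs : s ∈ S
        · have hsl : ZMod.dft a s = lam := by rw [← hatKer_eq']; exact hs
          simp only [Set.indicator_of_mem hs, Pi.smul_apply, smul_eq_mul, hsl]
          field_simp
        · simp [Set.indicator_of_notMem hs]
      rw [hcomp]
      exact Submodule.smul_mem _ _ (Submodule.subset_span ⟨i, hi, rfl⟩)
  refine ⟨hspan, ?_⟩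
  -- cardinality bound
  haveI : Fintype S := Fintype.ofFinite _
  have hb : LinearIndependent ℂ (fun t : S => (Pi.single (t : ZMod d) 1 : ZMod d → ℂ)) := by
    have h2 := (Pi.basisFun ℂ (ZMod d)).linearIndependent.comp
      (Subtype.val : S → ZMod d) Subtype.val_injective
    have he : (⇑(Pi.basisFun ℂ (ZMod d)) ∘ (Subtype.val : S → ZMod d))
        = fun t : S => (Pi.single (t : ZMod d) 1 : ZMod d → ℂ) :=
      funext fun t => by simp [Pi.basisFun_apply]
    rwa [he] at h2
  have hrange : Set.range (fun t : S => (Pi.single (t : ZMod d) 1 : ZMod d → ℂ)) = G2 := by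
    ext v
    constructor
    · rintro ⟨t, rfl⟩; exact ⟨t.1, t.2, rfl⟩
    · rintro ⟨t, ht, rfl⟩; exact ⟨⟨t, ht⟩, rfl⟩
  have h3 : Module.finrank ℂ (Submodule.span ℂ G2) = Fintype.card S := by
    rw [← hrange]; exact finrank_span_eq_card hb
  have h4 : G1 = ↑(Ω.image (fun i => S.indicator (FdMat d *ᵥ (Pi.single i 1 : ZMod d → ℂ)))) := by
    ext v
    simp only [hG1, Set.mem_setOf_eq, Finset.coe_image, Set.mem_image, Finset.mem_coe]
    constructor
    · rintro ⟨i, hi, rfl⟩; exact ⟨i, hi, rfl⟩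
    · rintro ⟨i, hi, rfl⟩; exact ⟨i, hi, rfl⟩
  calc Nat.card S = Fintype.card S := Nat.card_eq_fintype_card
    _ = Module.finrank ℂ (Submodule.span ℂ G2) := h3.symm
    _ = Module.finrank ℂ (Submodule.span ℂ G1) := by rw [hspan]
    _ ≤ (Ω.image (fun i => S.indicator (FdMat d *ᵥ (Pi.single i 1 : ZMod d → ℂ)))).card := by
        rw [h4]; exact finrank_span_finset_le_card _
    _ ≤ Ω.card := Finset.card_image_le
end

section
/- Let A = F_d* diag(â) F_d be a circular convolution operator on ℓ²(ℤ_d) with kernel a, let λ_1,…,λ_N be the distinct eigenvalues of A, and let P_k be the orthogonal projection onto the eigenspace E_k of diag(â) for λ_k. Let Ω ⊂ ℤ_d, set f_i = F_d e_i, let Y = {e_i, A e_i, …, A^{l_i} e_i : i ∈ Ω}, and let E be the linear span of Y. If for every i ∈ Ω one has A^{l_i+1} e_i ∈ E and for every k the family {P_k f_i : i ∈ Ω} is a frame for E_k, then Y is a frame for ℓ²(ℤ_d). -/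
open Matrix

/-!
Conjugation by the unitary `F_d` diagonalises `A`, and on the finite spectrum of `diag(â)` the
indicator of an eigenvalue `λ` is a polynomial `q`; hence `F_d* P_λ F_d e_i = q(A) e_i`. The
hypothesis on `A^{l_i+1} e_i` makes `E` invariant under `A`, so `E` contains every `q(A) e_i`,
hence `F_d* E_λ` for every `λ`, hence `F_d* ℓ²(ℤ_d) = ℓ²(ℤ_d)`.
-/

open Polynomial

section Krylov

variable {R M ι : Type*} [CommSemiring R] [AddCommMonoid M] [Module R M]

theorem Submodule.span_pow_apply_le_comap (f : Module.End R M) (s : Set ι) (v : ι → M)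
    (l : ι → ℕ)
    (h : ∀ i ∈ s, (f ^ (l i + 1)) (v i) ∈ span R {x | ∃ i ∈ s, ∃ n ≤ l i, x = (f ^ n) (v i)}) :
    span R {x | ∃ i ∈ s, ∃ n ≤ l i, x = (f ^ n) (v i)} ≤
      (span R {x | ∃ i ∈ s, ∃ n ≤ l i, x = (f ^ n) (v i)}).comap f := by
  rw [Submodule.span_le]
  rintro _ ⟨i, hi, n, hn, rfl⟩
  rw [SetLike.mem_coe, Submodule.mem_comap, ← Module.End.mul_apply, ← pow_succ']
  rcases hn.lt_or_eq with hlt | rfl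
  · exact Submodule.subset_span ⟨i, hi, n + 1, hlt, rfl⟩
  · exact h i hi

theorem Submodule.aeval_apply_mem_span_pow_apply (f : Module.End R M) (s : Set ι) (v : ι → M)
    (l : ι → ℕ)
    (h : ∀ i ∈ s, (f ^ (l i + 1)) (v i) ∈ span R {x | ∃ i ∈ s, ∃ n ≤ l i, x = (f ^ n) (v i)})
    (p : R[X]) {i : ι} (hi : i ∈ s) :
    aeval f p (v i) ∈ span R {x | ∃ i ∈ s, ∃ n ≤ l i, x = (f ^ n) (v i)} :=
  aeval_apply_smul_mem_of_le_comap
    (Submodule.subset_span (s := {x | ∃ i ∈ s, ∃ n ≤ l i, x = (f ^ n) (v i)})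
      ⟨i, hi, 0, Nat.zero_le _, by rw [pow_zero, Module.End.one_apply]⟩) p f
    (span_pow_apply_le_comap f s v l h)

theorem Matrix.aeval_mulVec_mem_span_pow_mulVec {n : Type*} [Fintype n] [DecidableEq n]
    (A : Matrix n n R) (s : Set ι) (v : ι → n → R) (l : ι → ℕ)
    (h : ∀ i ∈ s,
      A ^ (l i + 1) *ᵥ v i ∈ Submodule.span R {x | ∃ i ∈ s, ∃ k ≤ l i, x = A ^ k *ᵥ v i})
    (p : R[X]) {i : ι} (hi : i ∈ s) :
    aeval A p *ᵥ v i ∈ Submodule.span R {x | ∃ i ∈ s, ∃ k ≤ l i, x = A ^ k *ᵥ v i} := by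
  simp only [← Matrix.toLinAlgEquiv'_apply, map_pow] at h ⊢
  rw [← aeval_algHom_apply]
  exact Submodule.aeval_apply_mem_span_pow_apply _ s v l h p hi

end Krylov

theorem Polynomial.mul_aeval_eq_aeval_mul {R A : Type*} [CommSemiring R] [Semiring A]
    [Algebra R A] {f a b : A} (h : f * a = b * f) (p : R[X]) : f * aeval a p = aeval b p * f := by
  induction p using Polynomial.induction_on' with
  | add p q hp hq => rw [map_add, map_add, mul_add, add_mul, hp, hq]
  | monomial n c =>
    rw [aeval_monomial, aeval_monomial, ← mul_assoc, ← Algebra.commutes, mul_assoc,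
      (SemiconjBy.pow_right h n).eq, mul_assoc]

theorem Matrix.exists_aeval_diagonal_mulVec_eq_indicator {n K : Type*} [Fintype n]
    [DecidableEq n] [Field K] (b : n → K) (μ : K) :
    ∃ q : K[X], ∀ w : n → K, aeval (diagonal b) q *ᵥ w = {t | b t = μ}.indicator w := by
  classical
  refine ⟨Lagrange.basis (Finset.univ.image b) id μ, fun w => funext fun t => ?_⟩
  rw [← diagonalAlgHom_apply (R := K), aeval_algHom_apply, aeval_pi_apply, diagonalAlgHom_apply,
    mulVec_diagonal, Set.indicator_apply, coe_aeval_eq_eval]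
  have hbt : b t ∈ Finset.univ.image b := Finset.mem_image_of_mem b (Finset.mem_univ t)
  split_ifs with hμ
  · have h1 : eval (b t) (Lagrange.basis _ id (b t)) = 1 :=
      Lagrange.eval_basis_self (Set.injOn_id _) hbt
    rw [← hμ, h1, one_mul]
  · have h0 : eval (b t) (Lagrange.basis _ id μ) = 0 :=
      Lagrange.eval_basis_of_ne (v := id) (Ne.symm hμ) hbt
    rw [h0, zero_mul]

theorem Matrix.eq_top_of_mulVec_single_mem {n R : Type*} [Fintype n] [DecidableEq n]
    [CommSemiring R]
    {G : Matrix n n R} (hG : Function.Surjective G.mulVec) {E : Submodule R (n → R)}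
    (h : ∀ t, G *ᵥ Pi.single t 1 ∈ E) : E = ⊤ := by
  rw [eq_top_iff, ← (LinearMap.range_eq_top (f := G.mulVecLin)).2 hG, range_mulVecLin,
    Submodule.span_le]
  rintro _ ⟨t, rfl⟩
  rw [← mulVec_single_one]
  exact h t

section Fourier

open ZMod

variable (d : ℕ) [NeZero d]

theorem stdAddChar_neg_mul (j k : ZMod d) :
    stdAddChar (-(j * k)) =
      Complex.exp (-(2 * (Real.pi : ℂ) * Complex.I) * ((j.val : ℂ) * (k.val : ℂ)) / (d : ℂ)) := by
  have hcast : -(j * k) = ((-(j.val * k.val : ℤ) : ℤ) : ZMod d) := by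
    push_cast
    simp [ZMod.natCast_val]
  rw [hcast, stdAddChar_coe]
  push_cast
  ring_nf

theorem FdMat_apply (j k : ZMod d) :
    FdMat d j k = ((Real.sqrt d : ℝ) : ℂ)⁻¹ * stdAddChar (-(j * k)) := by
  rw [FdMat, of_apply, stdAddChar_neg_mul]

theorem hatKer_apply (a : ZMod d → ℂ) (j : ZMod d) :
    hatKer d a j = ∑ k, a k * stdAddChar (-(j * k)) := by
  simp only [hatKer, stdAddChar_neg_mul]

theorem FdMat_conjTranspose_mul_self : (FdMat d)ᴴ * FdMat d = 1 := by
  ext j k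
  have hsq : ((Real.sqrt d : ℝ) : ℂ)⁻¹ * ((Real.sqrt d : ℝ) : ℂ)⁻¹ * d = 1 := by
    rw [← mul_inv, ← Complex.ofReal_mul, Real.mul_self_sqrt (Nat.cast_nonneg d)]
    push_cast
    exact inv_mul_cancel₀ (Nat.cast_ne_zero.2 (NeZero.ne d))
  have hterm : ∀ t : ZMod d, star (FdMat d t j) * FdMat d t k =
      ((Real.sqrt d : ℝ) : ℂ)⁻¹ * ((Real.sqrt d : ℝ) : ℂ)⁻¹ * stdAddChar (t * (j - k)) := by
    intro t
    rw [FdMat_apply, FdMat_apply, star_mul', star_inv₀, Complex.star_def,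
      Complex.conj_ofReal, ← AddChar.map_neg_eq_conj, neg_neg, mul_sub, sub_eq_add_neg,
      AddChar.map_add_eq_mul]
    ring
  rw [mul_apply, one_apply]
  simp only [conjTranspose_apply, hterm, ← Finset.mul_sum,
    AddChar.sum_mulShift _ (isPrimitive_stdAddChar d), sub_eq_zero, ZMod.card]
  split_ifs <;> simp [hsq]

theorem FdMat_mul_convMat (a : ZMod d → ℂ) :
    FdMat d * convMat d a = diagonal (hatKer d a) * FdMat d := by
  ext j i
  rw [mul_apply, diagonal_mul, ← Equiv.sum_comp (Equiv.addRight i)]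
  have hterm : ∀ s : ZMod d, FdMat d j (s + i) * convMat d a (s + i) i =
      a s * stdAddChar (-(j * s)) * FdMat d j i := by
    intro s
    rw [FdMat_apply, FdMat_apply, convMat, of_apply, add_sub_cancel_right, mul_add, neg_add,
      AddChar.map_add_eq_mul]
    ring
  simp only [Equiv.coe_addRight, hterm, ← Finset.sum_mul, hatKer_apply]

end Fourier

/-- if `A^{l_i + 1} e_i` lies in the span `E` of
`Y = {A^n e_i : i ∈ Ω, n ≤ l i}` for every `i ∈ Ω`, and for every eigenvalue `λ` of
`diag(â)` the projections of the Fourier vectors `f_i = F_d e_i` onto the eigenspace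
`E_λ = span{e_t : â t = λ}` span that eigenspace, then `Y` is a frame for `ℓ²(ℤ_d)`. -/
theorem stmt2 (d : ℕ) [NeZero d] (a : ZMod d → ℂ) (Ω : Finset (ZMod d)) (l : ZMod d → ℕ)
    (hE : ∀ i ∈ Ω,
      ((convMat d a) ^ (l i + 1) *ᵥ (Pi.single i 1 : ZMod d → ℂ)) ∈
        Submodule.span ℂ {v : ZMod d → ℂ | ∃ i' ∈ Ω, ∃ n ≤ l i',
          v = (convMat d a) ^ n *ᵥ (Pi.single i' 1 : ZMod d → ℂ)})
    (hproj : ∀ lam ∈ Set.range (hatKer d a),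
      Submodule.span ℂ {v : ZMod d → ℂ | ∃ i ∈ Ω,
          v = Set.indicator {t : ZMod d | hatKer d a t = lam}
                (FdMat d *ᵥ (Pi.single i 1 : ZMod d → ℂ))}
        = Submodule.span ℂ {v : ZMod d → ℂ | ∃ t : ZMod d,
            hatKer d a t = lam ∧ v = (Pi.single t 1 : ZMod d → ℂ)}) :
    Submodule.span ℂ {v : ZMod d → ℂ | ∃ i ∈ Ω, ∃ n ≤ l i,
        v = (convMat d a) ^ n *ᵥ (Pi.single i 1 : ZMod d → ℂ)} = ⊤ := by
  set E := Submodule.span ℂ {v : ZMod d → ℂ | ∃ i ∈ Ω, ∃ n ≤ l i,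
    v = (convMat d a) ^ n *ᵥ (Pi.single i 1 : ZMod d → ℂ)}
  set F := FdMat d
  have hFF : Fᴴ * F = 1 := FdMat_conjTranspose_mul_self d
  have hproj_le : ∀ lam : ℂ, Submodule.span ℂ {v : ZMod d → ℂ | ∃ i ∈ Ω,
      v = {t | hatKer d a t = lam}.indicator (F *ᵥ Pi.single i 1)} ≤ E.comap Fᴴ.mulVecLin := by
    intro lam
    rw [Submodule.span_le]
    rintro _ ⟨i, hi, rfl⟩
    -- `q(diag â)` is the projection `P_λ`, and `F_d* q(diag â) F_d = q(A)`.
    obtain ⟨q, hq⟩ := exists_aeval_diagonal_mulVec_eq_indicator (hatKer d a) lam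
    rw [SetLike.mem_coe, Submodule.mem_comap, mulVecLin_apply, ← hq, mulVec_mulVec, mulVec_mulVec,
      mul_assoc, ← mul_aeval_eq_aeval_mul (FdMat_mul_convMat d a), ← mul_assoc, hFF, one_mul]
    exact aeval_mulVec_mem_span_pow_mulVec _ (Ω : Set (ZMod d)) (fun i => Pi.single i 1) l hE q hi
  refine eq_top_of_mulVec_single_mem (G := Fᴴ)
    (mulVec_surjective_iff_exists_right_inverse.2 ⟨F, hFF⟩) fun t => hproj_le (hatKer d a t) ?_
  rw [hproj _ ⟨t, rfl⟩]
  exact Submodule.subset_span ⟨t, rfl, rfl⟩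
end

section
/- Assume d is odd and a ∈ ℓ²(ℤ_d) is such that â is symmetric (â(j) = â(d−j) for all j) and strictly decreasing on {0, 1, …, (d−1)/2}. Let A be the circular convolution operator with kernel a and let Ω = {i_1, i_2} ⊂ ℤ_d with i_1 ≠ i_2. Then Y = {e_i, A e_i, …, A^{(d−1)/2} e_i : i ∈ Ω} is a frame for ℓ²(ℤ_d) if and only if gcd(|i_1 − i_2|, d) = 1. -/
open Matrix

/-! The discrete Fourier transform `𝓕` diagonalises `A`: it sends `A^n e_i` to
`k ↦ â(k)^n e(-ik)`, so `Y` is a frame iff no nonzero `g` is orthogonal to all these vectors.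
The level sets of `â` are exactly the pairs `{j, -j}`, and there are at most `(d + 1) / 2` of them,
so by Vandermonde, orthogonality to `Y` amounts to `e(-ij) g(j) + e(ij) g(-j) = 0` for all `j`
and `i ∈ Ω`. For `j ≠ 0` this 2×2 system is singular iff `2j(i₁ - i₂) = 0`; as `d` is odd, such a
`j` exists iff `i₁ - i₂` is a zero divisor, i.e. not coprime to `d`. -/

open Finset ZMod

section Vandermonde

variable {ι K : Type*} [Fintype ι] [Field K] [DecidableEq K]

theorem sum_fiber_eq_zero_of_forall_sum_mul_pow_eq_zero {N : ℕ} (f h : ι → K)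
    (hN : #(univ.image f) ≤ N) (hpow : ∀ n < N, ∑ j, h j * f j ^ n = 0) (μ : K) :
    ∑ j with f j = μ, h j = 0 := by
  set s := univ.image f
  let e := s.equivFin.symm
  have hv : (fun i => ∑ j with f j = e i, h j) = 0 := by
    refine Matrix.eq_zero_of_forall_pow_sum_mul_pow_eq_zero (f := fun i => (e i : K))
      (Subtype.val_injective.comp e.injective) fun n => ?_
    calc ∑ i, (∑ j with f j = e i, h j) * (e i : K) ^ (n : ℕ)
        = ∑ μ ∈ s, ∑ j with f j = μ, h j * f j ^ (n : ℕ) := by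
          rw [e.sum_comp (fun μ : s => (∑ j with f j = μ, h j) * (μ : K) ^ (n : ℕ)),
            sum_coe_sort s (fun μ => (∑ j with f j = μ, h j) * μ ^ (n : ℕ))]
          refine sum_congr rfl fun μ _ => ?_
          rw [sum_mul]
          exact sum_congr rfl fun j hj => by rw [(mem_filter.mp hj).2]
      _ = ∑ j, h j * f j ^ (n : ℕ) :=
          sum_fiberwise_of_maps_to (fun j _ => mem_image_of_mem f (mem_univ j)) _
      _ = 0 := hpow n (n.isLt.trans_le hN)
  by_cases hμ : μ ∈ s
  · simpa using congrFun hv (e.symm ⟨μ, hμ⟩)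
  · refine sum_eq_zero fun j hj => absurd ?_ hμ
    rw [← (mem_filter.mp hj).2]
    exact mem_image_of_mem f (mem_univ j)

theorem add_apply_neg_eq_zero_of_forall_sum_mul_pow_eq_zero {G : Type*} [AddCommGroup G]
    [Fintype G] [DecidableEq G] {N : ℕ} {f : G → K} (hfib : ∀ j k, f k = f j ↔ k = j ∨ k = -j)
    (hN : #(univ.image f) ≤ N) {h : G → K} (hpow : ∀ n < N, ∑ j, h j * f j ^ n = 0) (j : G) :
    h j + h (-j) = 0 := by
  have hsum := sum_fiber_eq_zero_of_forall_sum_mul_pow_eq_zero f h hN hpow (f j)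
  have hfiber : ({k | f k = f j} : Finset G) = {j, -j} := by
    ext k
    simp [hfib]
  rw [hfiber] at hsum
  by_cases hj : j = -j
  · rw [← hj] at hsum ⊢
    simp only [insert_eq_of_mem, mem_singleton, sum_singleton] at hsum
    rw [hsum, add_zero]
  · rwa [sum_pair hj] at hsum

end Vandermonde

theorem Submodule.span_eq_top_iff_forall_dotProduct_eq_zero {K ι : Type*} [Field K]
    [Fintype ι] [DecidableEq ι] (s : Set (ι → K)) :
    span K s = ⊤ ↔ ∀ g : ι → K, (∀ v ∈ s, g ⬝ᵥ v = 0) → g = 0 := by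
  rw [← dualAnnihilator_eq_bot_iff, eq_bot_iff]
  refine ((dotProductEquiv K ι).toEquiv.forall_congr fun g => ?_).symm
  rw [← SetLike.mem_coe, coe_dualAnnihilator_span]
  simp [Set.subset_def]

namespace ZMod

variable {d : ℕ} [NeZero d]

theorem eq_zero_of_neg_eq_self (hodd : Odd d) {x : ZMod d} (h : -x = x) : x = 0 :=
  ((neg_eq_self_iff x).mp h).resolve_right fun h2 => by
    obtain ⟨t, rfl⟩ := hodd
    omega

section Symmetric

variable {α : Type*} {f : ZMod d → α}

theorem apply_natAbs_valMinAbs (hsym : f.Even) (j : ZMod d) :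
    f (j.valMinAbs.natAbs : ZMod d) = f j := by
  rw [natCast_natAbs_valMinAbs]
  split_ifs
  exacts [rfl, hsym j]

theorem card_image_le_of_even [DecidableEq α] (hsym : f.Even) :
    #(univ.image f) ≤ d / 2 + 1 :=
  calc #(univ.image f) ≤ #((range (d / 2 + 1)).image fun s : ℕ => f s) := by
        refine card_le_card fun μ hμ => ?_
        obtain ⟨j, -, rfl⟩ := mem_image.mp hμ
        exact mem_image.mpr ⟨_, mem_range.mpr (Nat.lt_succ_of_le (natAbs_valMinAbs_le j)),
          apply_natAbs_valMinAbs hsym j⟩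
    _ ≤ d / 2 + 1 := card_image_le.trans (card_range _).le

theorem apply_eq_apply_iff_of_even_of_injOn (hsym : f.Even)
    (hinj : Set.InjOn (fun s : ℕ => f s) (Set.Iic (d / 2))) (j k : ZMod d) :
    f k = f j ↔ k = j ∨ k = -j := by
  refine ⟨fun hkj => ?_, by rintro (rfl | rfl); exacts [rfl, hsym j]⟩
  have hrep (x : ZMod d) :
      (x.valMinAbs.natAbs : ZMod d) = x ∨ (x.valMinAbs.natAbs : ZMod d) = -x := by
    rw [natCast_natAbs_valMinAbs]
    split_ifs <;> simp
  have hst : k.valMinAbs.natAbs = j.valMinAbs.natAbs :=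
    hinj (natAbs_valMinAbs_le k) (natAbs_valMinAbs_le j) <| by
      simp only [apply_natAbs_valMinAbs hsym, hkj]
  rcases hrep j with hj | hj <;> rcases hrep k with hk | hk <;> rw [hst] at hk <;> grind

end Symmetric

end ZMod

section Fourier

variable {d : ℕ} [NeZero d]

theorem hatKer_eq_dft (a : ZMod d → ℂ) : hatKer d a = 𝓕 a := by
  funext j
  refine sum_congr rfl fun k _ => ?_
  have hcast : -(k * j) = ((-(k.val * j.val : ℕ) : ℤ) : ZMod d) := by
    push_cast
    simp [natCast_val]
  rw [hcast, stdAddChar_coe, smul_eq_mul, mul_comm]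
  congr 2
  push_cast
  ring

theorem dft_convMat_mulVec (a f : ZMod d → ℂ) : 𝓕 (convMat d a *ᵥ f) = 𝓕 a * 𝓕 f := by
  funext k
  simp only [dft_apply, Pi.mul_apply, mulVec, dotProduct, convMat, of_apply, smul_eq_mul,
    mul_sum]
  rw [sum_comm]
  refine sum_congr rfl fun i _ => ?_
  rw [sum_mul]
  refine Fintype.sum_equiv (Equiv.subRight i) _ _ fun j => ?_
  have hchar : stdAddChar (-(j * k)) = stdAddChar (-((j - i) * k)) * stdAddChar (-(i * k)) := by
    rw [← AddChar.map_add_eq_mul]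
    ring_nf
  rw [Equiv.subRight_apply, hchar]
  ring

theorem dft_convMat_pow_mulVec (a f : ZMod d → ℂ) (n : ℕ) :
    𝓕 (convMat d a ^ n *ᵥ f) = 𝓕 a ^ n * 𝓕 f := by
  induction n with
  | zero => simp
  | succ n ih => rw [pow_succ', ← mulVec_mulVec, dft_convMat_mulVec, ih, pow_succ', mul_assoc]

theorem dft_single_one (i : ZMod d) : 𝓕 (Pi.single i 1) = fun k => stdAddChar (-(i * k)) := by
  funext k
  simp [dft_apply, Pi.single_apply]

theorem eq_zero_of_forall_dotProduct_pow_mul_stdAddChar_eq_zero (hodd : Odd d) {N : ℕ}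
    {f : ZMod d → ℂ} (hfib : ∀ j k, f k = f j ↔ k = j ∨ k = -j) (hN : #(univ.image f) ≤ N)
    {i₁ i₂ : ZMod d} (hunit : IsUnit (i₁ - i₂)) {g : ZMod d → ℂ}
    (hg : ∀ i, i = i₁ ∨ i = i₂ → ∀ n < N, g ⬝ᵥ (f ^ n * fun k => stdAddChar (-(i * k))) = 0) :
    g = 0 := by
  have hpair (i : ZMod d) (hi : i = i₁ ∨ i = i₂) (j : ZMod d) :
      stdAddChar (-(i * j)) * g j + stdAddChar (i * j) * g (-j) = 0 := by
    have hpow (n : ℕ) (hn : n < N) : ∑ k, stdAddChar (-(i * k)) * g k * f k ^ n = 0 := by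
      rw [← hg i hi n hn]
      exact sum_congr rfl fun k _ => by simp only [Pi.mul_apply, Pi.pow_apply]; ring
    simpa using add_apply_neg_eq_zero_of_forall_sum_mul_pow_eq_zero hfib hN hpow j
  funext j
  by_cases hj : j = 0
  · subst hj
    simpa using hpair i₁ (.inl rfl) 0
  have hinv (i : ZMod d) : stdAddChar (-(i * j)) * stdAddChar (i * j) = 1 := by
    rw [← AddChar.map_add_eq_mul, neg_add_cancel, AddChar.map_zero_eq_one]
  have hsq : stdAddChar (i₁ * j) ^ 2 ≠ stdAddChar (i₂ * j) ^ 2 := by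
    intro h
    rw [sq, sq, ← AddChar.map_add_eq_mul, ← AddChar.map_add_eq_mul] at h
    have h2 := injective_stdAddChar h
    exact hj <| hunit.mul_right_eq_zero.mp <|
      eq_zero_of_neg_eq_self hodd (by linear_combination -h2)
  -- eliminate `g (-j)` from the two equations `hpair i₁ j` and `hpair i₂ j`
  have hdet : (stdAddChar (i₂ * j) ^ 2 - stdAddChar (i₁ * j) ^ 2) * g j = 0 := by
    linear_combination (stdAddChar (i₁ * j) * stdAddChar (i₂ * j) ^ 2) * hpair i₁ (.inl rfl) j
      - (stdAddChar (i₁ * j) ^ 2 * stdAddChar (i₂ * j)) * hpair i₂ (.inr rfl) j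
      - (stdAddChar (i₂ * j) ^ 2 * g j) * hinv i₁ + (stdAddChar (i₁ * j) ^ 2 * g j) * hinv i₂
  exact (mul_eq_zero.mp hdet).resolve_left (sub_ne_zero.mpr hsq.symm)

theorem exists_ne_zero_forall_dotProduct_pow_mul_stdAddChar_eq_zero (hodd : Odd d)
    {f : ZMod d → ℂ} (hsym : f.Even) {i₁ i₂ : ZMod d} (hunit : ¬IsUnit (i₁ - i₂)) :
    ∃ g ≠ 0, ∀ i, i = i₁ ∨ i = i₂ → ∀ n : ℕ,
      g ⬝ᵥ (f ^ n * fun k => stdAddChar (-(i * k))) = 0 := by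
  obtain ⟨x, hxδ, hx⟩ : ∃ x, x * (i₁ - i₂) = 0 ∧ x ≠ 0 := by
    simpa [isUnit_iff_mem_nonZeroDivisors_of_finite, mem_nonZeroDivisors_iff_right] using hunit
  have hxneg : -x ≠ x := mt (eq_zero_of_neg_eq_self hodd) hx
  refine ⟨Pi.single x (stdAddChar (x * i₁)) - Pi.single (-x) (stdAddChar (-(x * i₁))), ?_, ?_⟩
  · intro h
    have hgx := congrFun h x
    simp only [Pi.sub_apply, Pi.single_eq_same, Pi.single_eq_of_ne' hxneg, sub_zero,
      Pi.zero_apply, stdAddChar_apply] at hgx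
    exact Circle.coe_ne_zero _ hgx
  · intro i hi n
    have hxi : x * (i₁ - i) = 0 := by
      rcases hi with rfl | rfl
      exacts [by simp, hxδ]
    have h1 : stdAddChar (x * i₁) * stdAddChar (-(i * x)) = 1 := by
      rw [← AddChar.map_add_eq_mul, show x * i₁ + -(i * x) = x * (i₁ - i) by ring, hxi,
        AddChar.map_zero_eq_one]
    have h2 : stdAddChar (-(x * i₁)) * stdAddChar (-(i * -x)) = 1 := by
      rw [← AddChar.map_add_eq_mul, show -(x * i₁) + -(i * -x) = -(x * (i₁ - i)) by ring, hxi,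
        neg_zero, AddChar.map_zero_eq_one]
    simp only [sub_dotProduct, single_dotProduct, Pi.mul_apply, Pi.pow_apply, hsym x]
    linear_combination f x ^ n * h1 - f x ^ n * h2

end Fourier

theorem stmt3_general (d : ℕ) [NeZero d] (hodd : Odd d) (a : ZMod d → ℂ)
    (hsym : ∀ j : ZMod d, hatKer d a (-j) = hatKer d a j)
    (hdec : ∀ s t : ℕ, s < t → t ≤ (d - 1) / 2 →
      (hatKer d a (t : ZMod d)).re < (hatKer d a (s : ZMod d)).re)
    (i₁ i₂ : ZMod d) :
    Submodule.span ℂ {v : ZMod d → ℂ | ∃ i : ZMod d, (i = i₁ ∨ i = i₂) ∧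
        ∃ n ≤ (d - 1) / 2, v = (convMat d a) ^ n *ᵥ (Pi.single i 1 : ZMod d → ℂ)} = ⊤
      ↔ Nat.gcd (i₁ - i₂).val d = 1 := by
  have hm : (d - 1) / 2 = d / 2 := by
    obtain ⟨t, rfl⟩ := hodd
    omega
  have hinj : Set.InjOn (fun s : ℕ => hatKer d a s) (Set.Iic (d / 2)) :=
    Set.InjOn.of_comp (g := Complex.re)
      (StrictAntiOn.injOn fun s _ t ht hst => hdec s t hst (hm ▸ ht))
  rw [hatKer_eq_dft] at hsym hinj
  have hdft (i : ZMod d) (n : ℕ) : 𝓕 (convMat d a ^ n *ᵥ Pi.single i 1) =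
      𝓕 a ^ n * fun k => stdAddChar (-(i * k)) := by
    rw [dft_convMat_pow_mulVec, dft_single_one]
  rw [← Nat.Coprime, ← isUnit_iff_coprime, natCast_zmod_val,
    ← Submodule.map_eq_top_iff (e := (𝓕 : (ZMod d → ℂ) ≃ₗ[ℂ] _)), ← Submodule.span_image,
    Submodule.span_eq_top_iff_forall_dotProduct_eq_zero]
  constructor
  · intro h
    by_contra hunit
    obtain ⟨g, hg0, hg⟩ :=
      exists_ne_zero_forall_dotProduct_pow_mul_stdAddChar_eq_zero hodd hsym hunit
    refine hg0 (h g ?_)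
    rintro _ ⟨_, ⟨i, hi, n, -, rfl⟩, rfl⟩
    rw [LinearEquiv.coe_coe, hdft]
    exact hg i hi n
  · intro hunit g hg
    refine eq_zero_of_forall_dotProduct_pow_mul_stdAddChar_eq_zero hodd
      (apply_eq_apply_iff_of_even_of_injOn hsym hinj) (card_image_le_of_even hsym) hunit
      fun i hi n hn => ?_
    rw [← hdft]
    exact hg _ ⟨_, ⟨i, hi, n, hm ▸ Nat.lt_succ_iff.mp hn, rfl⟩, rfl⟩

/-- for odd `d` and a kernel whose DFT is real, symmetric and strictly
decreasing on `{0, …, (d-1)/2}`, and `Ω = {i₁, i₂}` with `i₁ ≠ i₂`,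
`Y = {A^n e_i : i ∈ Ω, n ≤ (d-1)/2}` is a frame iff `gcd(|i₁ - i₂|, d) = 1`. -/
theorem stmt3 (d : ℕ) [NeZero d] (hodd : Odd d) (a : ZMod d → ℂ)
    (hsym : ∀ j : ZMod d, hatKer d a (-j) = hatKer d a j)
    (hreal : ∀ j : ZMod d, (hatKer d a j).im = 0)
    (hdec : ∀ s t : ℕ, s < t → t ≤ (d - 1) / 2 →
      (hatKer d a (t : ZMod d)).re < (hatKer d a (s : ZMod d)).re)
    (i₁ i₂ : ZMod d) (hne : i₁ ≠ i₂) :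
    Submodule.span ℂ {v : ZMod d → ℂ | ∃ i : ZMod d, (i = i₁ ∨ i = i₂) ∧
        ∃ n ≤ (d - 1) / 2, v = (convMat d a) ^ n *ᵥ (Pi.single i 1 : ZMod d → ℂ)} = ⊤
      ↔ Nat.gcd (i₁ - i₂).val d = 1 :=
  stmt3_general d hodd a hsym hdec i₁ i₂
end

section
/- Let 1 ≤ L ≤ d be an integer and Ω = {0, 1, …, L−1} ⊂ ℤ_d. Then for every circular convolution operator A ∈ 𝒜_L, the family Y = {e_i, A e_i, …, A^{N_A−1} e_i : i ∈ Ω} is a frame for ℓ²(ℤ_d). -/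
open Matrix

/-- The largest geometric multiplicity of an eigenvalue of `diag b`, i.e. the size of the
largest level set of `b`. -/
noncomputable def maxMult (d : ℕ) [NeZero d] (b : ZMod d → ℂ) : ℕ :=
  Finset.univ.sup fun j : ZMod d => Nat.card {t : ZMod d | b t = b j}

/-- The number of distinct eigenvalues of `diag b`. -/
noncomputable def numEig (d : ℕ) [NeZero d] (b : ZMod d → ℂ) : ℕ :=
  Nat.card (Set.range b)

namespace Stmt6Aux

noncomputable def zet (d : ℕ) : ℂ := (Complex.exp (2 * Real.pi * Complex.I / d))⁻¹

lemma zet_prim (d : ℕ) [NeZero d] : IsPrimitiveRoot (zet d) d :=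
  (Complex.isPrimitiveRoot_exp d (NeZero.ne d)).inv

lemma zet_pow_mod (d : ℕ) [NeZero d] (n : ℕ) : zet d ^ n = zet d ^ (n % d) := by
  conv_lhs => rw [← Nat.div_add_mod n d]
  rw [pow_add, pow_mul, (zet_prim d).pow_eq_one, one_pow, one_mul]

noncomputable def chi (d : ℕ) [NeZero d] (m : ZMod d) : ℂ := zet d ^ m.val

lemma chi_exp (d : ℕ) [NeZero d] (j k : ZMod d) :
    Complex.exp (-(2 * (Real.pi : ℂ) * Complex.I) * ((j.val : ℂ) * (k.val : ℂ)) / (d : ℂ))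
      = chi d (j * k) := by
  rw [chi, ZMod.val_mul, ← zet_pow_mod, zet, ← Complex.exp_neg, ← Complex.exp_nat_mul]
  congr 1
  push_cast
  ring

lemma chi_add (d : ℕ) [NeZero d] (u v : ZMod d) : chi d (u + v) = chi d u * chi d v := by
  rw [chi, chi, chi, ZMod.val_add, ← zet_pow_mod, pow_add]

lemma chi_pow (d : ℕ) [NeZero d] (u v : ZMod d) : chi d (u * v) = chi d u ^ v.val := by
  rw [chi, chi, ZMod.val_mul, ← zet_pow_mod, pow_mul]

lemma chi_inj (d : ℕ) [NeZero d] : Function.Injective (chi d) := fun u v h =>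
  ZMod.val_injective d ((zet_prim d).pow_inj u.val_lt v.val_lt h)

lemma chi_eq_one_iff (d : ℕ) [NeZero d] (m : ZMod d) : chi d m = 1 ↔ m = 0 := by
  constructor
  · intro h
    have hd := ((zet_prim d).pow_eq_one_iff_dvd m.val).mp h
    exact (ZMod.val_eq_zero m).mp (Nat.eq_zero_of_dvd_of_lt hd m.val_lt)
  · rintro rfl
    rw [chi, ZMod.val_zero, pow_zero]

lemma sum_chi (d : ℕ) [NeZero d] (m : ZMod d) :
    ∑ j : ZMod d, chi d (j * m) = if m = 0 then (d : ℂ) else 0 := by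
  have h1 : ∑ j : ZMod d, chi d (j * m) = ∑ k ∈ Finset.range d, chi d m ^ k := by
    refine Finset.sum_nbij' (fun j : ZMod d => j.val) (fun k : ℕ => (k : ZMod d))
      (fun j _ => Finset.mem_range.mpr j.val_lt)
      (fun k hk => Finset.mem_univ _)
      (fun j _ => ZMod.natCast_zmod_val j)
      (fun k hk => ZMod.val_cast_of_lt (Finset.mem_range.mp hk))
      (fun j _ => by rw [mul_comm, chi_pow])
  rw [h1]
  by_cases hm : m = 0
  · subst hm
    have h0 : chi d (0 : ZMod d) = 1 := (chi_eq_one_iff d 0).mpr rfl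
    simp [h0]
  · rw [if_neg hm]
    have hx : chi d m ≠ 1 := fun h => hm ((chi_eq_one_iff d m).mp h)
    rw [geom_sum_eq hx]
    have : chi d m ^ d = 1 := by
      rw [chi, ← pow_mul, mul_comm, pow_mul, (zet_prim d).pow_eq_one, one_pow]
    rw [this, sub_self, zero_div]

lemma hatKer_chi (d : ℕ) [NeZero d] (a : ZMod d → ℂ) (j : ZMod d) :
    hatKer d a j = ∑ k : ZMod d, a k * chi d (j * k) := by
  unfold hatKer
  exact Finset.sum_congr rfl fun k _ => by rw [chi_exp]

lemma pow_apply (d : ℕ) [NeZero d] (a : ZMod d → ℂ) :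
    ∀ (n : ℕ) (t i : ZMod d),
      ((convMat d a) ^ n) t i * (d : ℂ)
        = ∑ j : ZMod d, (hatKer d a j) ^ n * chi d (j * (i - t))
  | 0, t, i => by
    rw [pow_zero, Matrix.one_apply]
    simp only [pow_zero, one_mul]
    rw [sum_chi]
    by_cases h : t = i
    · subst h; rw [sub_self, if_pos rfl, if_pos rfl, one_mul]
    · rw [if_neg h, if_neg (fun hc => h (sub_eq_zero.mp hc).symm), zero_mul]
  | (n + 1), t, i => by
    rw [pow_succ, Matrix.mul_apply, Finset.sum_mul]
    have hstep : ∀ s : ZMod d,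
        ((convMat d a) ^ n) t s * (convMat d a) s i * (d : ℂ)
          = ∑ j : ZMod d, (hatKer d a j) ^ n * chi d (j * (s - t)) * a (s - i) := by
      intro s
      rw [mul_right_comm, pow_apply d a n t s, Finset.sum_mul]
      rfl
    rw [Finset.sum_congr rfl fun s _ => hstep s, Finset.sum_comm]
    refine Finset.sum_congr rfl fun j _ => ?_
    -- ∑ s, b j ^ n * chi (j*(s-t)) * a (s-i) = b j ^ (n+1) * chi (j*(i-t))
    have hre : ∑ s : ZMod d, (hatKer d a j) ^ n * chi d (j * (s - t)) * a (s - i)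
        = ∑ m : ZMod d, (hatKer d a j) ^ n * chi d (j * (m + i - t)) * a m := by
      exact Fintype.sum_equiv (Equiv.subRight i) _ _ fun s => by
        simp [Equiv.subRight, sub_add_cancel]
    rw [hre]
    have hsplit : ∀ m : ZMod d,
        (hatKer d a j) ^ n * chi d (j * (m + i - t)) * a m
          = (hatKer d a j) ^ n * chi d (j * (i - t)) * (a m * chi d (j * m)) := by
      intro m
      have : j * (m + i - t) = j * m + j * (i - t) := by ring
      rw [this, chi_add]
      ring
    rw [Finset.sum_congr rfl fun m _ => hsplit m, ← Finset.mul_sum, ← hatKer_chi]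
    ring

lemma vdm (m : ℕ) (x v : Fin m → ℂ) (hx : Function.Injective x)
    (h : ∀ n : Fin m, ∑ k, x k ^ (n : ℕ) * v k = 0) : v = 0 := by
  refine Matrix.eq_zero_of_mulVec_eq_zero (M := (Matrix.vandermonde x)ᵀ) ?_ ?_
  · rw [Matrix.det_transpose]
    exact Matrix.det_vandermonde_ne_zero_iff.mpr hx
  · funext n
    simpa [Matrix.mulVec, dotProduct, Matrix.vandermonde] using h n

end Stmt6Aux

open Stmt6Aux

/-- for `1 ≤ L ≤ d` and `Ω = {0, 1, …, L-1}`, the family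
`Y = {A^n e_i : i ∈ Ω, n ≤ N_A - 1}` is a frame for every circular convolution operator
`A ∈ 𝒜_L`. -/


theorem stmt6 (d : ℕ) [NeZero d] (L : ℕ) (hL1 : 1 ≤ L) (hLd : L ≤ d)
    (a : ZMod d → ℂ) (hA : maxMult d (hatKer d a) = L) :
    Submodule.span ℂ {v : ZMod d → ℂ | ∃ i : ZMod d, i.val < L ∧
        ∃ n < numEig d (hatKer d a),
        v = (convMat d a) ^ n *ᵥ (Pi.single i 1 : ZMod d → ℂ)} = ⊤ := by
  classical
  set b := hatKer d a with hb
  by_contra hne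
  obtain ⟨f, hf0, hfbot⟩ := Submodule.exists_dual_map_eq_bot_of_lt_top
    (lt_top_iff_ne_top.mpr hne) inferInstance
  set w : ZMod d → ℂ := fun t => f (Pi.single t 1) with hwdef
  have hfv : ∀ v : ZMod d → ℂ, f v = ∑ t, v t * w t := by
    intro v
    rw [LinearMap.pi_apply_eq_sum_univ f v]
    refine Finset.sum_congr rfl fun t _ => ?_
    rw [smul_eq_mul]
    congr 2
    funext j
    simp [Pi.single_apply, eq_comm]
  have hvanish : ∀ i : ZMod d, i.val < L → ∀ n, n < numEig d b →
      ∑ t, ((convMat d a) ^ n) t i * w t = 0 := by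
    intro i hi n hn
    have hmem : ((convMat d a) ^ n *ᵥ Pi.single i 1) ∈ Submodule.span ℂ
        {v : ZMod d → ℂ | ∃ i : ZMod d, i.val < L ∧ ∃ n < numEig d b,
          v = (convMat d a) ^ n *ᵥ (Pi.single i 1 : ZMod d → ℂ)} :=
      Submodule.subset_span ⟨i, hi, n, hn, rfl⟩
    have h0 : f ((convMat d a) ^ n *ᵥ Pi.single i 1) = 0 := by
      have := Submodule.mem_map_of_mem (f := f) hmem
      rw [hfbot] at this
      exact this
    rw [hfv] at h0
    rw [← h0]
    refine Finset.sum_congr rfl fun t _ => ?_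
    simp [Matrix.mulVec_single]
  set c : ZMod d → ℂ := fun j => ∑ t, w t * chi d (j * (-t)) with hcdef
  have claim1 : ∀ i : ZMod d, i.val < L → ∀ n, n < numEig d b →
      ∑ j, b j ^ n * (chi d (j * i) * c j) = 0 := by
    intro i hi n hn
    have h1 : (∑ t, ((convMat d a) ^ n) t i * w t) * (d : ℂ) = 0 := by
      rw [hvanish i hi n hn, zero_mul]
    rw [Finset.sum_mul] at h1
    have h2 : ∀ t : ZMod d, ((convMat d a) ^ n) t i * w t * (d : ℂ)
        = ∑ j, b j ^ n * chi d (j * (i - t)) * w t := by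
      intro t
      rw [mul_right_comm, pow_apply d a n t i, Finset.sum_mul]
    rw [Finset.sum_congr rfl fun t _ => h2 t, Finset.sum_comm] at h1
    rw [← h1]
    refine Finset.sum_congr rfl fun j _ => ?_
    rw [hcdef]
    simp only
    rw [Finset.mul_sum, Finset.mul_sum]
    refine Finset.sum_congr rfl fun t _ => ?_
    have : j * (i - t) = j * i + j * (-t) := by ring
    rw [this, chi_add]
    ring
  have claim2 : ∀ i : ZMod d, i.val < L → ∀ μ : ℂ,
      ∑ j ∈ Finset.univ.filter (fun j => b j = μ), chi d (j * i) * c j = 0 := by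
    intro i hi
    set V : Finset ℂ := Finset.image b Finset.univ with hV
    have hNV : numEig d b = V.card := by
      unfold numEig
      have hr : Set.range b = ↑V := by rw [hV, Finset.coe_image, Finset.coe_univ, Set.image_univ]
      rw [hr, Nat.card_coe_set_eq, Set.ncard_coe_finset]
    set e : Fin V.card ≃ {μ // μ ∈ V} := V.equivFin.symm with he
    set x : Fin V.card → ℂ := fun k => (e k : ℂ) with hx
    have hxinj : Function.Injective x := fun k l h =>
      e.injective (Subtype.ext h)
    set v : Fin V.card → ℂ := fun k =>
      ∑ j ∈ Finset.univ.filter (fun j => b j = x k), chi d (j * i) * c j with hv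
    have hkey : ∀ n : Fin V.card, ∑ k, x k ^ (n : ℕ) * v k = 0 := by
      intro n
      have hsum : ∑ k, x k ^ (n : ℕ) * v k
          = ∑ μ ∈ V, μ ^ (n : ℕ) *
              ∑ j ∈ Finset.univ.filter (fun j => b j = μ), chi d (j * i) * c j := by
        rw [← Finset.sum_coe_sort V (fun μ => μ ^ (n : ℕ) *
              ∑ j ∈ Finset.univ.filter (fun j => b j = μ), chi d (j * i) * c j)]
        exact Equiv.sum_comp e (fun μ : {μ // μ ∈ V} => (μ : ℂ) ^ (n : ℕ) *
              ∑ j ∈ Finset.univ.filter (fun j => b j = (μ : ℂ)), chi d (j * i) * c j)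
      rw [hsum]
      have hfib : ∑ μ ∈ V, μ ^ (n : ℕ) *
              ∑ j ∈ Finset.univ.filter (fun j => b j = μ), chi d (j * i) * c j
          = ∑ j, b j ^ (n : ℕ) * (chi d (j * i) * c j) := by
        rw [← Finset.sum_fiberwise_of_maps_to (g := b) (t := V)
          (fun j _ => Finset.mem_image_of_mem b (Finset.mem_univ j))
          (fun j => b j ^ (n : ℕ) * (chi d (j * i) * c j))]
        refine Finset.sum_congr rfl fun μ _ => ?_
        rw [Finset.mul_sum]
        refine Finset.sum_congr rfl fun j hj => ?_
        rw [(Finset.mem_filter.mp hj).2]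
      rw [hfib]
      exact claim1 i hi n (lt_of_lt_of_eq n.isLt hNV.symm)
    have hv0 : v = 0 := vdm _ x v hxinj hkey
    intro μ
    by_cases hμ : μ ∈ V
    · have : v (e.symm ⟨μ, hμ⟩) = 0 := by rw [hv0]; rfl
      rw [hv] at this
      simp only [hx, Equiv.apply_symm_apply] at this
      exact this
    · rw [Finset.filter_false_of_mem, Finset.sum_empty]
      intro j _
      exact fun hbj => hμ (hbj ▸ Finset.mem_image_of_mem b (Finset.mem_univ j))
  have claim3 : ∀ j₀ : ZMod d, c j₀ = 0 := by
    intro j₀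
    set F : Finset (ZMod d) := Finset.univ.filter (fun j => b j = b j₀) with hF
    have hFL : F.card ≤ L := by
      have h1 : Nat.card {t : ZMod d | b t = b j₀} ≤ maxMult d b :=
        Finset.le_sup (f := fun j : ZMod d => Nat.card {t : ZMod d | b t = b j})
          (Finset.mem_univ j₀)
      have h2 : {t : ZMod d | b t = b j₀} = ↑F := by
        rw [hF]; ext t; simp
      rw [h2, Nat.card_coe_set_eq, Set.ncard_coe_finset] at h1
      rw [← hA]
      exact h1
    set e2 : Fin F.card ≃ {j // j ∈ F} := F.equivFin.symm with he2
    set x : Fin F.card → ℂ := fun k => chi d (e2 k : ZMod d) with hx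
    have hxinj : Function.Injective x := fun k l h =>
      e2.injective (Subtype.ext (chi_inj d h))
    set v : Fin F.card → ℂ := fun k => c (e2 k : ZMod d) with hv
    have hkey : ∀ n : Fin F.card, ∑ k, x k ^ (n : ℕ) * v k = 0 := by
      intro n
      set i : ZMod d := ((n : ℕ) : ZMod d) with hi
      have hival : i.val = (n : ℕ) :=
        ZMod.val_cast_of_lt (lt_of_lt_of_le n.isLt (hFL.trans hLd))
      have hiL : i.val < L := by rw [hival]; exact lt_of_lt_of_le n.isLt hFL
      have h0 := claim2 i hiL (b j₀)
      have hsum : ∑ k, x k ^ (n : ℕ) * v k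
          = ∑ j ∈ F, chi d (j * i) * c j := by
        rw [← Finset.sum_coe_sort F (fun j => chi d (j * i) * c j)]
        rw [← Equiv.sum_comp e2 (fun j => chi d ((j : ZMod d) * i) * c (j : ZMod d))]
        refine Finset.sum_congr rfl fun k _ => ?_
        rw [hx, hv, chi_pow, hival]
      rw [hsum]
      exact h0
    have hv0 : v = 0 := vdm _ x v hxinj hkey
    have hj₀F : j₀ ∈ F := by rw [hF]; simp
    have : v (e2.symm ⟨j₀, hj₀F⟩) = 0 := by rw [hv0]; rfl
    rw [hv] at this
    simpa using this
  have claim4 : ∀ t : ZMod d, w t = 0 := by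
    intro t
    have hinv : ∑ j, chi d (j * t) * c j = (d : ℂ) * w t := by
      have h1 : ∀ j : ZMod d, chi d (j * t) * c j
          = ∑ s, w s * chi d (j * (t - s)) := by
        intro j
        rw [hcdef]
        simp only
        rw [Finset.mul_sum]
        refine Finset.sum_congr rfl fun s _ => ?_
        have : j * (t - s) = j * t + j * (-s) := by ring
        rw [this, chi_add]
        ring
      rw [Finset.sum_congr rfl fun j _ => h1 j, Finset.sum_comm]
      have h2 : ∀ s : ZMod d, ∑ j, w s * chi d (j * (t - s))
          = if s = t then w s * d else 0 := by
        intro s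
        rw [← Finset.mul_sum, sum_chi]
        by_cases h : s = t
        · rw [if_pos h, if_pos (by rw [h, sub_self])]
        · rw [if_neg h, if_neg (fun hc => h (sub_eq_zero.mp hc).symm), mul_zero]
      rw [Finset.sum_congr rfl fun s _ => h2 s, Finset.sum_ite_eq' Finset.univ t
        (fun s => w s * d)]
      rw [if_pos (Finset.mem_univ t)]
      ring
    have hc0 : ∑ j, chi d (j * t) * c j = 0 := by
      refine Finset.sum_eq_zero fun j _ => ?_
      rw [claim3 j, mul_zero]
    rw [hc0] at hinv
    have hd : (d : ℂ) ≠ 0 := Nat.cast_ne_zero.mpr (NeZero.ne d)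
    exact (mul_eq_zero.mp hinv.symm).resolve_left hd
  apply hf0
  apply LinearMap.ext
  intro v
  rw [hfv]
  simp [claim4]
end

section
/- Assume d is prime. Then for every Ω ⊂ ℤ_d with |Ω| = L and every circular convolution operator A ∈ 𝒜_L, the family Y = {e_i, A e_i, …, A^{N_A−1} e_i : i ∈ Ω} is a frame for ℓ²(ℤ_d). -/
/-!
The characters `χ_j k = ζ ^ (j k)` of `ℤ_d` are left eigenvectors of the circular convolution `A`,
with eigenvalues `â j`. A linear form `g ⬝ᵥ ·` vanishing on every `A ^ n e_i` (`i ∈ Ω`, `n < N_A`)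
has `g = ∑ c_j χ_j`; as the powers `n < N_A` separate the distinct eigenvalues (Lagrange
interpolation), `∑_{â j = μ} c_j ζ ^ (j i) = 0` for each eigenvalue `μ` and each `i ∈ Ω`. Every
level set of `â` has at most `L = |Ω|` elements, so Chebotarev's theorem (every square minor of the
DFT matrix of prime order is invertible) forces `c = 0`.

Chebotarev's theorem is proved in `ℤ[ζ] = ℤ[X] / (Φ_p)` by reduction modulo `ζ - 1`, whose residue
ring is `𝔽_p`. A nonzero polynomial with `m` terms, exponents below `p` and `m` distinct roots among
the powers of `ζ` can be divided by a power of `ζ - 1` so that its reduction is nonzero; that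
reduction still has at most `m` terms but is divisible by `(X - 1) ^ m`. This is impossible: the
operator `X ∂ - deg` removes exactly one term and one factor `X - 1` at a time.
-/

open Matrix

open Polynomial Finset

namespace Polynomial

theorem coeff_X_mul_derivative {R : Type*} [Semiring R] (f : R[X]) (n : ℕ) :
    (X * derivative f).coeff n = f.coeff n * n := by
  cases n with
  | zero => simp
  | succ n => rw [coeff_X_mul, coeff_derivative]; push_cast; rfl

variable {K : Type*} [Field K] {p : ℕ} [CharP K p]

theorem support_X_mul_derivative_sub_C_natDegree_mul {f : K[X]} (hf : f.natDegree < p) :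
    (X * derivative f - C (f.natDegree : K) * f).support = f.support.erase f.natDegree := by
  ext k
  have hcoeff : (X * derivative f - C (f.natDegree : K) * f).coeff k
      = f.coeff k * ((k : K) - f.natDegree) := by
    rw [coeff_sub, coeff_X_mul_derivative, coeff_C_mul]; ring
  rw [mem_support_iff, hcoeff, mem_erase, mem_support_iff, mul_ne_zero_iff, sub_ne_zero,
    and_comm]
  refine and_congr_left fun hk => ?_
  have hk : k < p := (le_natDegree_of_ne_zero hk).trans_lt hf
  rw [Ne, Ne, CharP.natCast_eq_natCast K p, Nat.ModEq, Nat.mod_eq_of_lt hk, Nat.mod_eq_of_lt hf]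

theorem eq_zero_of_X_sub_C_dvd_of_card_support_le_one {a : K} (ha : a ≠ 0) {f : K[X]}
    (hdvd : X - C a ∣ f) (hf : #f.support ≤ 1) : f = 0 := by
  obtain ⟨m, c, rfl⟩ := card_support_le_one_iff_monomial.mp hf
  have : c * a ^ m = 0 := by simpa using (dvd_iff_isRoot.mp hdvd)
  simp [(mul_eq_zero.mp this).resolve_right (pow_ne_zero m ha)]

theorem lt_card_support_of_X_sub_C_pow_dvd {a : K} (ha : a ≠ 0) {n : ℕ} {f : K[X]}
    (hf : f ≠ 0) (hdeg : f.natDegree < p) (hdvd : (X - C a) ^ n ∣ f) : n < #f.support := by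
  induction n generalizing f with
  | zero => exact card_pos.mpr (nonempty_support_iff.mpr hf)
  | succ n ih =>
    have hcard : 1 < #f.support := by
      by_contra! h
      exact hf (eq_zero_of_X_sub_C_dvd_of_card_support_le_one ha
        ((dvd_pow_self _ n.succ_ne_zero).trans hdvd) h)
    set g := X * derivative f - C (f.natDegree : K) * f
    have hsupp := support_X_mul_derivative_sub_C_natDegree_mul hdeg
    have hcard' : #g.support = #f.support - 1 := by
      rw [hsupp, card_erase_of_mem (natDegree_mem_support_of_nonzero hf)]
    have hg : g ≠ 0 := by
      rw [← support_nonempty, ← card_pos, hcard']; omega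
    have hgdeg : g.natDegree < p := by
      have hmem := natDegree_mem_support_of_nonzero hg
      rw [hsupp] at hmem
      exact (le_natDegree_of_mem_supp _ (mem_of_mem_erase hmem)).trans_lt hdeg
    have hgdvd : (X - C a) ^ n ∣ g :=
      dvd_sub ((pow_sub_one_dvd_derivative_of_pow_dvd hdvd).mul_left X)
        ((pow_dvd_pow _ n.le_succ |>.trans hdvd).mul_left _)
    have := ih hg hgdeg hgdvd
    omega

end Polynomial

section Reduction

variable {R K : Type*} [CommRing R] [IsDomain R] [IsNoetherianRing R] [Field K] {p : ℕ}
  [CharP K p] (ψ : R →+* K) {π : R}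

theorem Polynomial.exists_eq_C_pow_mul_map_ne_zero (hπ : ¬IsUnit π) (hker : ∀ x, ψ x = 0 → π ∣ x)
    {f : R[X]} (hf : f ≠ 0) : ∃ k g, f = C π ^ k * g ∧ g.map ψ ≠ 0 := by
  obtain ⟨g, hfg, hndvd⟩ :=
    (FiniteMultiplicity.of_not_isUnit (mt isUnit_C.mp hπ) hf).exists_eq_pow_mul_and_not_dvd
  refine ⟨_, g, hfg, fun hg => hndvd ((C_dvd_iff_dvd_coeff _ _).mpr fun n => hker _ ?_)⟩
  rw [← coeff_map, hg, coeff_zero]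

theorem Polynomial.eq_zero_of_card_support_le_of_isRoot (hπ : ¬IsUnit π)
    (hker : ∀ x, ψ x = 0 → π ∣ x) {f : R[X]} (hdeg : ∀ n ∈ f.support, n < p) {Z : Finset R}
    (hZ : ∀ z ∈ Z, ψ z = 1) (hroot : ∀ z ∈ Z, f.IsRoot z) (hcard : #f.support ≤ #Z) : f = 0 := by
  by_contra hf
  obtain ⟨k, g, rfl, hg⟩ := exists_eq_C_pow_mul_map_ne_zero ψ hπ hker hf
  have hπk : π ^ k ≠ 0 := by rintro h; simp [← C_pow, h] at hf
  have hg0 : g ≠ 0 := by rintro rfl; simp at hg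
  have hsupp : (g.map ψ).support ⊆ (C π ^ k * g).support := fun n hn => by
    rw [mem_support_iff, coeff_map] at hn
    rw [mem_support_iff, ← C_pow, coeff_C_mul]
    exact mul_ne_zero hπk fun h => hn (by rw [h, map_zero])
  have hdvd : ∏ z ∈ Z, (X - C z) ∣ g := by
    refine (Multiset.prod_X_sub_C_dvd_iff_le_roots hg0 Z.val).mpr
      ((Multiset.le_iff_subset Z.nodup).mpr fun z hz => (mem_roots hg0).mpr ?_)
    have := hroot z hz
    rw [IsRoot, eval_mul, ← C_pow, eval_C] at this
    exact (mul_eq_zero.mp this).resolve_left hπk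
  have hdvd' : (X - C 1) ^ #Z ∣ g.map ψ := by
    have := Polynomial.map_dvd ψ hdvd
    rwa [Polynomial.map_prod, prod_congr rfl fun z hz => by
      rw [Polynomial.map_sub, map_X, map_C, hZ z hz], prod_const] at this
  have hlt := lt_card_support_of_X_sub_C_pow_dvd one_ne_zero hg
    (hdeg _ (hsupp (natDegree_mem_support_of_nonzero hg))) hdvd'
  exact hlt.not_ge ((card_le_card hsupp).trans hcard)

theorem Matrix.det_of_pow_ne_zero (hπ : ¬IsUnit π) (hker : ∀ x, ψ x = 0 → π ∣ x)
    {ι : Type*} [Fintype ι] [DecidableEq ι] {e : ι → ℕ} (he : Function.Injective e)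
    (hep : ∀ i, e i < p) {z : ι → R} (hz : Function.Injective z) (hz1 : ∀ j, ψ (z j) = 1) :
    (Matrix.of fun j i => z j ^ e i).det ≠ 0 := by
  classical
  intro hdet
  obtain ⟨w, hw0, hw⟩ := Matrix.exists_mulVec_eq_zero_iff.mpr hdet
  set f : R[X] := ∑ i, C (w i) * X ^ e i
  have hcoeff : ∀ i, f.coeff (e i) = w i := fun i => by
    simp [f, he.eq_iff]
  have hsupp : f.support ⊆ univ.image e := fun n hn => by
    rw [mem_support_iff, finsetSum_coeff] at hn
    obtain ⟨i, -, hi⟩ := exists_ne_zero_of_sum_ne_zero hn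
    rw [coeff_C_mul_X_pow, ite_ne_right_iff] at hi
    exact mem_image.mpr ⟨i, mem_univ i, hi.1.symm⟩
  have hf : f = 0 := by
    refine eq_zero_of_card_support_le_of_isRoot ψ hπ hker (Z := univ.image z)
      (fun n hn => ?_) (by simpa using hz1) (fun z' hz' => ?_) ?_
    · obtain ⟨i, -, rfl⟩ := mem_image.mp (hsupp hn)
      exact hep i
    · obtain ⟨j, -, rfl⟩ := mem_image.mp hz'
      have hj := congrFun hw j
      simp only [Matrix.mulVec, dotProduct, Matrix.of_apply, Pi.zero_apply] at hj
      simp only [IsRoot, f, eval_finsetSum, eval_mul, eval_C, eval_pow, eval_X, ← hj]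
      exact sum_congr rfl fun i _ => mul_comm _ _
    · rw [card_image_of_injective _ hz]
      exact (card_le_card hsupp).trans card_image_le
  exact hw0 (_root_.funext fun i => by rw [← hcoeff, hf, coeff_zero, Pi.zero_apply])

end Reduction

namespace AdjoinRoot

theorem root_sub_of_dvd_mk_sub {R : Type*} [CommRing R] (f g : R[X]) (a : R) :
    root f - of f a ∣ mk f g - of f (g.eval a) := by
  simpa using _root_.map_dvd (mk f) (X_sub_C_dvd_sub_C_eval (p := g) (a := a))

theorem exists_ringHom_zmod_cyclotomic (p : ℕ) [Fact p.Prime] :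
    ∃ ψ : AdjoinRoot (cyclotomic p ℤ) →+* ZMod p,
      ψ (root _) = 1 ∧ ∀ x, ψ x = 0 → root _ - 1 ∣ x := by
  have h : (cyclotomic p ℤ).eval₂ (Int.castRingHom (ZMod p)) 1 = 0 := by simp
  refine ⟨lift _ 1 h, lift_root h, fun x hx => ?_⟩
  obtain ⟨g, rfl⟩ := mk_surjective x
  have hp : root (cyclotomic p ℤ) - 1 ∣ (p : AdjoinRoot (cyclotomic p ℤ)) := by
    simpa [eval_one_cyclotomic_prime] using
      root_sub_of_dvd_mk_sub (cyclotomic p ℤ) (cyclotomic p ℤ) 1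
  rw [lift_mk, ← (Int.castRingHom (ZMod p)).map_one, eval₂_hom, eq_intCast,
    ZMod.intCast_zmod_eq_zero_iff_dvd] at hx
  obtain ⟨t, ht⟩ := hx
  have := root_sub_of_dvd_mk_sub (cyclotomic p ℤ) g 1
  rw [map_one, ht] at this
  simpa using this.add (hp.mul_right (of _ t))

end AdjoinRoot

namespace IsPrimitiveRoot

variable {L : Type*} [Field L] [CharZero L] {p : ℕ} [Fact p.Prime] {ζ : L}

theorem exists_injective_adjoinRoot_cyclotomic {n : ℕ} (hζ : IsPrimitiveRoot ζ n) (hn : 0 < n) :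
    ∃ φ : AdjoinRoot (cyclotomic n ℤ) →+* L, Function.Injective φ ∧ φ (AdjoinRoot.root _) = ζ := by
  have h : (cyclotomic n ℤ).eval₂ (Int.castRingHom L) ζ = 0 := by
    rw [eval₂_eq_eval_map, map_cyclotomic_int]; exact hζ.isRoot_cyclotomic hn
  refine ⟨AdjoinRoot.lift _ ζ h, (injective_iff_map_eq_zero _).mpr fun x hx => ?_,
    AdjoinRoot.lift_root h⟩
  obtain ⟨g, rfl⟩ := AdjoinRoot.mk_surjective x
  rw [AdjoinRoot.lift_mk] at hx
  rw [AdjoinRoot.mk_eq_zero, cyclotomic_eq_minpoly hζ hn]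
  exact minpoly.isIntegrallyClosed_dvd (hζ.isIntegral hn) hx

/-- Chebotarev's theorem on roots of unity. -/
theorem det_pow_val_mul_val_ne_zero (hζ : IsPrimitiveRoot ζ p) {ι : Type*} [Fintype ι]
    [DecidableEq ι] {s t : ι → ZMod p} (hs : Function.Injective s) (ht : Function.Injective t) :
    (Matrix.of fun j i => ζ ^ ((s i).val * (t j).val)).det ≠ 0 := by
  obtain ⟨φ, hφ, hφr⟩ := hζ.exists_injective_adjoinRoot_cyclotomic (Fact.out : p.Prime).pos
  have := hφ.isDomain φ
  have := isNoetherianRing_of_surjective _ _ _ (AdjoinRoot.mk_surjective (g := cyclotomic p ℤ))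
  obtain ⟨ψ, hψr, hker⟩ := AdjoinRoot.exists_ringHom_zmod_cyclotomic p
  set r := AdjoinRoot.root (cyclotomic p ℤ)
  have hπ : ¬IsUnit (r - 1) := fun h => by simpa [hψr] using h.map ψ
  have hz : Function.Injective fun j => r ^ (t j).val := by
    refine .of_comp (f := φ) fun j k hjk => ht (ZMod.val_injective p ?_)
    simp only [Function.comp_apply, map_pow, hφr] at hjk
    exact hζ.pow_inj (ZMod.val_lt _) (ZMod.val_lt _) hjk
  have hdet := Matrix.det_of_pow_ne_zero ψ hπ hker ((ZMod.val_injective p).comp hs)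
    (fun i => ZMod.val_lt (s i)) hz (fun j => by simp [hψr])
  rw [← map_ne_zero_iff _ hφ, RingHom.map_det] at hdet
  convert hdet using 2
  ext j i
  simp [hφr, ← pow_mul, mul_comm]

theorem eq_zero_of_forall_sum_mul_pow_eq_zero (hζ : IsPrimitiveRoot ζ p)
    {S T : Finset (ZMod p)} (hST : #S ≤ #T) {v : ZMod p → L}
    (hv : ∀ t ∈ T, ∑ s ∈ S, v s * ζ ^ (s.val * t.val) = 0) : ∀ s ∈ S, v s = 0 := by
  obtain ⟨e⟩ : Nonempty (S ↪ T) := Function.Embedding.nonempty_of_card_le (by simpa using hST)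
  have hv' := Matrix.eq_zero_of_mulVec_eq_zero (v := fun s : S => v s)
    (hζ.det_pow_val_mul_val_ne_zero Subtype.val_injective
      (Subtype.val_injective.comp e.injective)) (_root_.funext fun j => ?_)
  · exact fun s hs => congrFun hv' ⟨s, hs⟩
  · rw [Pi.zero_apply, ← hv _ (e j).2, ← sum_attach]
    simp [Matrix.mulVec, dotProduct, mul_comm]

end IsPrimitiveRoot

theorem Submodule.span_eq_top_of_forall_dotProduct_eq_zero {K n : Type*} [Field K] [Fintype n]
    [DecidableEq n] {s : Set (n → K)} (h : ∀ g : n → K, (∀ v ∈ s, g ⬝ᵥ v = 0) → g = 0) :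
    span K s = ⊤ := by
  rw [← Submodule.dualAnnihilator_eq_bot_iff, eq_bot_iff]
  intro ϕ hϕ
  obtain ⟨g, rfl⟩ := (dotProductEquiv K n).surjective ϕ
  rw [Submodule.mem_bot, map_eq_zero_iff _ (dotProductEquiv K n).injective]
  exact h g fun v hv => (Submodule.mem_dualAnnihilator _).mp hϕ v (subset_span hv)

theorem Finset.sum_filter_eq_zero_of_forall_sum_pow_mul_eq_zero {ι K : Type*} [Fintype ι]
    [Field K] [DecidableEq K] {b w : ι → K} (h : ∀ n < #(univ.image b), ∑ j, b j ^ n * w j = 0)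
    (μ : K) : ∑ j with b j = μ, w j = 0 := by
  set T := univ.image b
  by_cases hμ : μ ∈ T
  swap
  · exact sum_eq_zero fun j hj =>
      absurd ((mem_filter.mp hj).2 ▸ mem_image_of_mem b (mem_univ j)) hμ
  -- the Lagrange basis polynomial of `μ` on the nodes `T` isolates the fibre of `b` over `μ`
  set P := Lagrange.basis T id μ
  have hP : ∀ j, P.eval (b j) = if b j = μ then 1 else 0 := fun j => by
    split_ifs with hj
    · rw [hj]; exact Lagrange.eval_basis_self (v := id) (Set.injOn_id _) hμ
    · exact Lagrange.eval_basis_of_ne (v := id) (Ne.symm hj) (mem_image_of_mem b (mem_univ j))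
  have hdeg : P.natDegree < #T := by
    rw [Lagrange.natDegree_basis (v := id) (Set.injOn_id _) hμ]
    exact Nat.sub_lt (card_pos.mpr ⟨μ, hμ⟩) one_pos
  calc ∑ j with b j = μ, w j = ∑ j, P.eval (b j) * w j := by simp [sum_filter, hP]
    _ = ∑ n ∈ range #T, P.coeff n * ∑ j, b j ^ n * w j := by
      simp_rw [eval_eq_sum_range' hdeg, sum_mul, mul_sum]
      rw [sum_comm]
      exact sum_congr rfl fun n _ => sum_congr rfl fun j _ => by ring
    _ = 0 := sum_eq_zero fun n hn => by rw [h n (mem_range.mp hn), mul_zero]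

theorem Matrix.vecMul_pow_eq_pow_smul {n R : Type*} [Fintype n] [DecidableEq n] [CommSemiring R]
    {A : Matrix n n R} {v : n → R} {c : R} (h : v ᵥ* A = c • v) (k : ℕ) :
    v ᵥ* A ^ k = c ^ k • v := by
  induction k with
  | zero => simp
  | succ k ih => rw [pow_succ, ← vecMul_vecMul, ih, smul_vecMul, h, smul_smul, pow_succ]

theorem Matrix.span_pow_mulVec_single_eq_top {n ι K : Type*} [Fintype n] [DecidableEq n]
    [Fintype ι] [Field K] [DecidableEq K] (A : Matrix n n K) {χ : ι → n → K}
    (hχ : Submodule.span K (Set.range χ) = ⊤) {b : ι → K} (heig : ∀ j, χ j ᵥ* A = b j • χ j)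
    {Ω : Finset n}
    (hΩ : ∀ c : ι → K, (∀ μ, ∀ i ∈ Ω, ∑ j with b j = μ, c j * χ j i = 0) → c = 0) :
    Submodule.span K {v | ∃ i ∈ Ω, ∃ k < #(univ.image b), v = A ^ k *ᵥ Pi.single i 1} = ⊤ := by
  refine Submodule.span_eq_top_of_forall_dotProduct_eq_zero fun g hg => ?_
  obtain ⟨c, rfl⟩ :=
    (Submodule.mem_span_range_iff_exists_fun K).mp (hχ ▸ Submodule.mem_top (x := g))
  have hc : ∀ i ∈ Ω, ∀ k < #(univ.image b), ∑ j, b j ^ k * (c j * χ j i) = 0 := by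
    intro i hi k hk
    rw [← hg _ ⟨i, hi, k, hk, rfl⟩, dotProduct_mulVec, dotProduct_single, mul_one, sum_vecMul]
    simp [smul_vecMul, vecMul_pow_eq_pow_smul (heig _), mul_left_comm]
  rw [hΩ c fun μ i hi => sum_filter_eq_zero_of_forall_sum_pow_mul_eq_zero (hc i hi) μ]
  simp

theorem AddChar.vecMul_of_sub {G R : Type*} [AddCommGroup G] [Fintype G] [CommRing R]
    (χ : AddChar G R) (a : G → R) :
    ⇑χ ᵥ* Matrix.of (fun k i => a (k - i)) = (∑ k, a k * χ k) • ⇑χ := by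
  ext i
  simp only [Matrix.vecMul, dotProduct, Matrix.of_apply, Pi.smul_apply, smul_eq_mul, sum_mul]
  refine Fintype.sum_equiv (Equiv.subRight i) _ _ fun k => ?_
  rw [Equiv.subRight_apply, mul_assoc, ← AddChar.map_add_eq_mul, sub_add_cancel, mul_comm]

theorem IsPrimitiveRoot.span_range_pow_val_mul_val_eq_top {L : Type*} [Field L] [CharZero L]
    {p : ℕ} [Fact p.Prime] {ζ : L} (hζ : IsPrimitiveRoot ζ p) :
    Submodule.span L (Set.range fun j : ZMod p => fun k : ZMod p => ζ ^ (j.val * k.val)) = ⊤ := by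
  refine LinearIndependent.span_eq_top_of_card_eq_finrank' ?_
    (Module.finrank_fintype_fun_eq_card L).symm
  rw [Fintype.linearIndependent_iff]
  intro c hc j
  exact hζ.eq_zero_of_forall_sum_mul_pow_eq_zero (S := univ) (T := univ) le_rfl
    (fun t _ => by simpa using congrFun hc t) j (mem_univ j)

theorem Complex.isPrimitiveRoot_exp_neg (n : ℕ) (h0 : n ≠ 0) :
    IsPrimitiveRoot (exp (-(2 * Real.pi * I) / n)) n := by
  simpa [neg_div, Complex.exp_neg] using (Complex.isPrimitiveRoot_exp n h0).inv

theorem AddChar.coe_zmodChar_mulShift {C : Type*} [CommMonoid C] {n : ℕ} [NeZero n] {ζ : C}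
    (hζ : ζ ^ n = 1) (j : ZMod n) :
    ⇑((zmodChar n hζ).mulShift j) = fun k => ζ ^ (j.val * k.val) := by
  ext k
  rw [mulShift_apply, ← zmodChar_apply' hζ]
  simp

theorem hatKer_eq_sum_mul_pow (d : ℕ) [NeZero d] (a : ZMod d → ℂ) (j : ZMod d) :
    hatKer d a j = ∑ k, a k * Complex.exp (-(2 * Real.pi * Complex.I) / d) ^ (j.val * k.val) := by
  refine sum_congr rfl fun k _ => ?_
  rw [← Complex.exp_nat_mul]
  congr 2
  push_cast
  ring

theorem vecMul_convMat (d : ℕ) [NeZero d] (a : ZMod d → ℂ) (j : ZMod d) :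
    (fun k : ZMod d => Complex.exp (-(2 * Real.pi * Complex.I) / d) ^ (j.val * k.val)) ᵥ*
        convMat d a =
      hatKer d a j • fun k => Complex.exp (-(2 * Real.pi * Complex.I) / d) ^ (j.val * k.val) := by
  have hζ := (Complex.isPrimitiveRoot_exp_neg d (NeZero.ne d)).pow_eq_one
  have := AddChar.vecMul_of_sub ((AddChar.zmodChar d hζ).mulShift j) a
  rw [AddChar.coe_zmodChar_mulShift] at this
  rw [hatKer_eq_sum_mul_pow]
  exact this

theorem card_filter_le_maxMult (d : ℕ) [NeZero d] (b : ZMod d → ℂ) (j : ZMod d) :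
    #{t | b t = b j} ≤ maxMult d b := by
  refine le_trans ?_ (le_sup (f := fun j => Nat.card {t | b t = b j}) (mem_univ j))
  simp [Nat.card_eq_fintype_card, Fintype.card_subtype]

theorem numEig_eq_card_image (d : ℕ) [NeZero d] (b : ZMod d → ℂ) :
    numEig d b = #(univ.image b) := by
  rw [numEig, Nat.card_eq_card_toFinset, Set.toFinset_range]

/-- if `d` is prime, then for every `Ω ⊂ ℤ_d` with `|Ω| = L` and every
circular convolution operator `A ∈ 𝒜_L`, the family `Y = {A^n e_i : i ∈ Ω, n ≤ N_A - 1}`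
is a frame for `ℓ²(ℤ_d)`. -/
theorem stmt7 (d : ℕ) [NeZero d] (hp : Nat.Prime d) (L : ℕ) (Ω : Finset (ZMod d))
    (hΩ : Ω.card = L) (a : ZMod d → ℂ) (hA : maxMult d (hatKer d a) = L) :
    Submodule.span ℂ {v : ZMod d → ℂ | ∃ i ∈ Ω, ∃ n < numEig d (hatKer d a),
        v = (convMat d a) ^ n *ᵥ (Pi.single i 1 : ZMod d → ℂ)} = ⊤ := by
  have := Fact.mk hp
  have hζ := Complex.isPrimitiveRoot_exp_neg d hp.ne_zero
  rw [numEig_eq_card_image]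
  refine Matrix.span_pow_mulVec_single_eq_top _ hζ.span_range_pow_val_mul_val_eq_top
    (vecMul_convMat d a) fun c hc => funext fun j => ?_
  refine hζ.eq_zero_of_forall_sum_mul_pow_eq_zero ?_ (hc (hatKer d a j)) j (by simp)
  rw [hΩ, ← hA]
  exact card_filter_le_maxMult d _ j
end
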